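/- Let λ₁, λ₂ be nonzero integers, let u, v ∈ ℤ with v ≠ 0, gcd(u,v) = 1 and v dividing λ₁ − λ₂, let M = [[1,u],[0,v]], and let A = M·diag(λ₁,λ₂)·M⁻¹ (which lies in M_2(ℤ)). Assume rad(λ₂) divides rad(λ₁) and P'(A) ≠ ∅. Then for T ∈ M_2(ℚ): (i) T·G_A ⊆ G_A if and only if T = [[x,y],[0,z]] with x, y ∈ ℛ and z ∈ ℤ[1/λ₂]; and (ii) T is invertible with T·G_A = G_A if and only if T = [[x,y],[0,z]] where x is a unit of ℛ, y ∈ ℛ, and z is a unit of ℤ[1/λ₂] (equivalently z = ε ∏ p^{k_p} with ε ∈ {1,−1}, the product over the primes p dividing λ₂, k_p ∈ ℤ). Here ℛ = ℤ[1/(λ₁λ₂)] = ℤ[1/det A]. -/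

import Mathlib

open Matrix Polynomial

/-- The image of an integer matrix in `M_n(ℚ)`. -/
noncomputable def Qmat {n : ℕ} (A : Matrix (Fin n) (Fin n) ℤ) : Matrix (Fin n) (Fin n) ℚ :=
  A.map (Int.cast : ℤ → ℚ)

/-- `G_A = {A^k x : x ∈ ℤ^n, k ∈ ℤ} ⊆ ℚ^n`, negative powers taken in `M_n(ℚ)`. -/
noncomputable def GA {n : ℕ} (A : Matrix (Fin n) (Fin n) ℤ) : Set (Fin n → ℚ) :=
  {w | ∃ (x : Fin n → ℤ) (k : ℤ), w = (Qmat A ^ k) *ᵥ (fun i => (x i : ℚ))}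

/-- `G_A` as an additive subgroup of `ℚ^n` (it is closed under the group operations,
so the closure has carrier exactly `G_A`). -/
noncomputable def GAgrp {n : ℕ} (A : Matrix (Fin n) (Fin n) ℤ) : AddSubgroup (Fin n → ℚ) :=
  AddSubgroup.closure (GA A)

/-- The subring `ℤ[1/d] = {a / d^m : a ∈ ℤ, m ∈ ℕ}` of `ℚ`. -/
def Zinv (d : ℤ) : Set ℚ :=
  {q | ∃ (a : ℤ) (m : ℕ), q = (a : ℚ) / (d : ℚ) ^ m}

/-- The radical of an integer: the product of its distinct positive prime divisors. -/
def rad (N : ℤ) : ℕ := ∏ p ∈ N.natAbs.primeFactors, p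

/-- `x` is a unit of the subring `ℤ[1/d]` of `ℚ`. -/
def ZinvUnit (d : ℤ) (x : ℚ) : Prop := x ≠ 0 ∧ x ∈ Zinv d ∧ x⁻¹ ∈ Zinv d




lemma zinv_int (d a : ℤ) : (a : ℚ) ∈ Zinv d := ⟨a, 0, by simp⟩

lemma zinv_zero (d : ℤ) : (0:ℚ) ∈ Zinv d := ⟨0, 0, by simp⟩

lemma zinv_one (d : ℤ) : (1:ℚ) ∈ Zinv d := ⟨1, 0, by simp⟩

lemma zinv_add {d : ℤ} (hd : d ≠ 0) {q r : ℚ} (hq : q ∈ Zinv d) (hr : r ∈ Zinv d) :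
    q + r ∈ Zinv d := by
  obtain ⟨a, m, rfl⟩ := hq
  obtain ⟨b, n, rfl⟩ := hr
  refine ⟨a * d ^ n + b * d ^ m, m + n, ?_⟩
  have : (d:ℚ) ≠ 0 := Int.cast_ne_zero.mpr hd
  field_simp
  push_cast; ring

lemma zinv_mul {d : ℤ} {q r : ℚ} (hq : q ∈ Zinv d) (hr : r ∈ Zinv d) :
    q * r ∈ Zinv d := by
  obtain ⟨a, m, rfl⟩ := hq
  obtain ⟨b, n, rfl⟩ := hr
  refine ⟨a * b, m + n, ?_⟩
  push_cast
  rw [pow_add]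
  ring

lemma zinv_neg {d : ℤ} {q : ℚ} (hq : q ∈ Zinv d) : -q ∈ Zinv d := by
  obtain ⟨a, m, rfl⟩ := hq
  exact ⟨-a, m, by push_cast; ring⟩

lemma zinv_sub {d : ℤ} (hd : d ≠ 0) {q r : ℚ} (hq : q ∈ Zinv d) (hr : r ∈ Zinv d) :
    q - r ∈ Zinv d := by
  rw [sub_eq_add_neg]; exact zinv_add hd hq (zinv_neg hr)

lemma zinv_subset {c d : ℤ} (hd : d ≠ 0) {e : ℕ} (h : c ∣ d ^ e) : Zinv c ⊆ Zinv d := by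
  rintro q ⟨a, m, rfl⟩
  obtain ⟨c', hc'⟩ := h
  by_cases hc : (c:ℚ) = 0
  · rcases Nat.eq_zero_or_pos m with rfl | hm
    · exact ⟨a, 0, by simp⟩
    · refine ⟨0, 0, by simp [hc, zero_pow hm.ne']⟩
  refine ⟨a * c' ^ m, e * m, ?_⟩
  have hd' : (d:ℚ) ≠ 0 := Int.cast_ne_zero.mpr hd
  have : ((d:ℚ)) ^ e = (c:ℚ) * (c':ℚ) := by exact_mod_cast congrArg (Int.cast : ℤ → ℚ) hc'
  push_cast
  rw [pow_mul, this, mul_pow]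
  have hcc : (c:ℚ) * (c':ℚ) ≠ 0 := by rw [← this]; exact pow_ne_zero e hd'
  obtain ⟨h1, h2⟩ := mul_ne_zero_iff.mp hcc
  rw [div_eq_div_iff (pow_ne_zero m h1) (mul_ne_zero (pow_ne_zero m h1) (pow_ne_zero m h2))]
  ring

/-- every m ≥ 1 divides n^m if all its prime factors divide n -/
lemma nat_dvd_pow_of_primes {n : ℕ} : ∀ m : ℕ, m ≠ 0 → (∀ p : ℕ, p.Prime → p ∣ m → p ∣ n) →
    m ∣ n ^ m := by
  intro m
  induction m using Nat.strong_induction_on with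
  | _ m ih =>
    intro hm hp
    rcases eq_or_ne m 1 with rfl | hm1
    · simp
    · obtain ⟨p, pp, pd⟩ := Nat.exists_prime_and_dvd hm1
      obtain ⟨m', rfl⟩ := pd
      have hm' : m' ≠ 0 := by rintro rfl; simp at hm
      have hlt : m' < p * m' := by
        have := pp.two_le
        calc m' = 1 * m' := (one_mul m').symm
        _ < p * m' := by
          have h2 := pp.two_le
          have h3 := Nat.pos_of_ne_zero hm'
          nlinarith
      have h1 : m' ∣ n ^ m' := ih m' hlt hm' (fun q hq hqd => hp q hq (hqd.mul_left p))
      have h2 : p ∣ n := hp p pp ⟨m', rfl⟩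
      calc p * m' ∣ n * n ^ m' := mul_dvd_mul h2 h1
      _ = n ^ (m' + 1) := (pow_succ' n m').symm
      _ ∣ n ^ (p * m') := pow_dvd_pow n (by nlinarith [pp.two_le, Nat.pos_of_ne_zero hm'])



noncomputable def Fm (l1 l2 U V : ℚ) (k : ℤ) : Matrix (Fin 2) (Fin 2) ℚ :=
  !![l1 ^ k, U * (l2 ^ k - l1 ^ k) / V; 0, l2 ^ k]

lemma Fm_zero (l1 l2 U V : ℚ) : Fm l1 l2 U V 0 = 1 := by
  simp [Fm, Matrix.one_fin_two]

lemma Fm_mul (l1 l2 U V : ℚ) (h1 : l1 ≠ 0) (h2 : l2 ≠ 0) (j k : ℤ) :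
    Fm l1 l2 U V j * Fm l1 l2 U V k = Fm l1 l2 U V (j + k) := by
  ext i j'
  fin_cases i <;> fin_cases j' <;>
    simp [Fm, Matrix.mul_apply, Fin.sum_univ_two, zpow_add₀ h1, zpow_add₀ h2]
  rcases eq_or_ne V 0 with rfl | hV
  · simp
  · field_simp
    ring

lemma Fm_pow (l1 l2 U V : ℚ) (h1 : l1 ≠ 0) (h2 : l2 ≠ 0) (k : ℤ) :
    (Fm l1 l2 U V 1) ^ k = Fm l1 l2 U V k := by
  have hnat : ∀ n : ℕ, (Fm l1 l2 U V 1) ^ n = Fm l1 l2 U V n := by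
    intro n
    induction n with
    | zero => simpa using (Fm_zero l1 l2 U V).symm
    | succ n ih => rw [pow_succ, ih, Fm_mul l1 l2 U V h1 h2]; norm_cast
  cases k with
  | ofNat n => rw [Int.ofNat_eq_coe, zpow_natCast, hnat]
  | negSucc n =>
    rw [zpow_negSucc, hnat (n+1)]
    refine Matrix.inv_eq_right_inv ?_
    rw [Fm_mul l1 l2 U V h1 h2]
    rw [Int.negSucc_eq]
    push_cast
    rw [show ((n:ℤ)+1) + (-((n:ℤ)+1)) = 0 by ring, Fm_zero]


lemma QmatA_eq (lam1 lam2 u v : ℤ) (hv : v ≠ 0) (A : Matrix (Fin 2) (Fin 2) ℤ)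
    (hA : Qmat A =
      !![(1 : ℚ), (u : ℚ); 0, (v : ℚ)] * !![(lam1 : ℚ), 0; 0, (lam2 : ℚ)] *
        (!![(1 : ℚ), (u : ℚ); 0, (v : ℚ)])⁻¹) :
    Qmat A = Fm (lam1:ℚ) (lam2:ℚ) (u:ℚ) (v:ℚ) 1 := by
  have hvQ : (v:ℚ) ≠ 0 := Int.cast_ne_zero.mpr hv
  have hinv : (!![(1 : ℚ), (u : ℚ); 0, (v : ℚ)])⁻¹ = !![(1:ℚ), -u/v; 0, 1/v] := by
    refine Matrix.inv_eq_right_inv ?_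
    rw [Matrix.mul_fin_two, Matrix.one_fin_two]
    congr 1 <;> field_simp <;> simp [hvQ]
  rw [hA, hinv]
  ext i j
  fin_cases i <;> fin_cases j <;>
      simp [Fm, Matrix.mul_apply, Fin.sum_univ_two] <;>
    field_simp <;> ring

lemma Fm_mulVec (l1 l2 U V : ℚ) (k : ℤ) (w : Fin 2 → ℚ) :
    Fm l1 l2 U V k *ᵥ w = ![l1 ^ k * w 0 + U * (l2 ^ k - l1 ^ k) / V * w 1, l2 ^ k * w 1] := by
  funext i
  fin_cases i <;> simp [Fm, Matrix.mulVec, dotProduct, Fin.sum_univ_two, Matrix.vecHead, Matrix.vecTail]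

lemma vec2_eta (w : Fin 2 → ℚ) : w = ![w 0, w 1] := by
  funext i; fin_cases i <;> simp

lemma Qmat_pow {n : ℕ} (A : Matrix (Fin n) (Fin n) ℤ) (m : ℕ) :
    Qmat (A ^ m) = (Qmat A) ^ m := by
  show (Int.castRingHom ℚ).mapMatrix (A ^ m) = ((Int.castRingHom ℚ).mapMatrix A) ^ m
  exact map_pow _ _ _

lemma Qmat_mulVec_cast {n : ℕ} (M : Matrix (Fin n) (Fin n) ℤ) (x : Fin n → ℤ) :
    (Qmat M) *ᵥ (fun i => (x i : ℚ)) = fun i => (((M *ᵥ x) i : ℤ) : ℚ) := by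
  funext i
  simp [Qmat, Matrix.mulVec, dotProduct, Matrix.map_apply]

section
variable (lam1 lam2 u v : ℤ)

lemma zinv_cast_mul_zpow (d a : ℤ) (k : ℤ) : (a:ℚ) * (d:ℚ) ^ k ∈ Zinv d := by
  cases k with
  | ofNat n =>
    refine ⟨a * d ^ n, 0, ?_⟩
    rw [Int.ofNat_eq_coe, zpow_natCast, pow_zero, div_one]
    push_cast
    rfl
  | negSucc n =>
    refine ⟨a, n + 1, ?_⟩
    rw [zpow_negSucc, div_eq_mul_inv]

lemma zinv_offdiag (hl1 : lam1 ≠ 0) (hl2 : lam2 ≠ 0) (hv : v ≠ 0)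
    (hdvd : v ∣ lam1 - lam2) (k : ℤ) (a : ℤ) :
    (u:ℚ) * ((lam2:ℚ) ^ k - (lam1:ℚ) ^ k) / (v:ℚ) * (a:ℚ) ∈ Zinv (lam1 * lam2) := by
  have hvQ : (v:ℚ) ≠ 0 := Int.cast_ne_zero.mpr hv
  have h12 : ∀ K : ℕ, v ∣ lam1 ^ K - lam2 ^ K :=
    fun K => hdvd.trans (sub_dvd_pow_sub_pow lam1 lam2 K)
  cases k with
  | ofNat n =>
    obtain ⟨d, hd⟩ := (dvd_sub_comm.mp (h12 n))
    refine ⟨u * d * a, 0, ?_⟩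
    rw [Int.ofNat_eq_coe, zpow_natCast, zpow_natCast]
    have hd' : (lam2:ℚ) ^ n - (lam1:ℚ) ^ n = (v:ℚ) * (d:ℚ) := by exact_mod_cast hd
    rw [hd']
    push_cast
    field_simp
  | negSucc n =>
    obtain ⟨d, hd⟩ := h12 (n + 1)
    refine ⟨u * d * a, n + 1, ?_⟩
    rw [zpow_negSucc, zpow_negSucc]
    have hd' : (lam1:ℚ) ^ (n+1) - (lam2:ℚ) ^ (n+1) = (v:ℚ) * (d:ℚ) := by exact_mod_cast hd
    have h1Q : (lam1:ℚ) ≠ 0 := Int.cast_ne_zero.mpr hl1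
    have h2Q : (lam2:ℚ) ≠ 0 := Int.cast_ne_zero.mpr hl2
    have key : ((lam2:ℚ) ^ (n+1))⁻¹ - ((lam1:ℚ) ^ (n+1))⁻¹ =
        ((lam1:ℚ) ^ (n+1) - (lam2:ℚ) ^ (n+1)) / (((lam1:ℚ) * lam2) ^ (n+1)) := by
      rw [mul_pow]
      field_simp
    rw [key, hd']
    push_cast
    rw [mul_pow]
    field_simp

lemma GA_eq (hl1 : lam1 ≠ 0) (hl2 : lam2 ≠ 0) (hv : v ≠ 0)
    (hdvd : v ∣ lam1 - lam2)
    (A : Matrix (Fin 2) (Fin 2) ℤ)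
    (hQ : Qmat A = Fm (lam1:ℚ) (lam2:ℚ) (u:ℚ) (v:ℚ) 1)
    (hsub1 : Zinv (lam1 * lam2) ⊆ Zinv lam1) :
    GA A = {w | w 0 ∈ Zinv (lam1 * lam2) ∧ w 1 ∈ Zinv lam2} := by
  have h1Q : (lam1:ℚ) ≠ 0 := Int.cast_ne_zero.mpr hl1
  have h2Q : (lam2:ℚ) ≠ 0 := Int.cast_ne_zero.mpr hl2
  have hvQ : (v:ℚ) ≠ 0 := Int.cast_ne_zero.mpr hv
  have h12 : lam1 * lam2 ≠ 0 := mul_ne_zero hl1 hl2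
  have hsub2 : Zinv lam1 ⊆ Zinv (lam1 * lam2) :=
    zinv_subset h12 (e := 1) (by rw [pow_one]; exact ⟨lam2, rfl⟩)
  have hsub3 : Zinv lam2 ⊆ Zinv (lam1 * lam2) :=
    zinv_subset h12 (e := 1) (by rw [pow_one]; exact ⟨lam1, mul_comm lam1 lam2⟩)
  have hpow : ∀ k : ℤ, (Qmat A) ^ k = Fm (lam1:ℚ) (lam2:ℚ) (u:ℚ) (v:ℚ) k := by
    intro k
    rw [hQ, Fm_pow _ _ _ _ h1Q h2Q]
  ext w
  constructor
  · rintro ⟨x, k, rfl⟩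
    rw [hpow, Fm_mulVec]
    constructor
    · show (lam1:ℚ) ^ k * (x 0 : ℚ) + (u:ℚ) * ((lam2:ℚ) ^ k - (lam1:ℚ) ^ k) / v * (x 1 : ℚ)
        ∈ Zinv (lam1 * lam2)
      refine zinv_add h12 (hsub2 ?_) (zinv_offdiag lam1 lam2 u v hl1 hl2 hv hdvd k (x 1))
      rw [mul_comm]
      exact zinv_cast_mul_zpow lam1 (x 0) k
    · show (lam2:ℚ) ^ k * (x 1 : ℚ) ∈ Zinv lam2
      rw [mul_comm]
      exact zinv_cast_mul_zpow lam2 (x 1) k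
  · rintro ⟨hs, ht⟩
    obtain ⟨c, n, hc⟩ := ht
    set s' : ℚ := (u:ℚ) * ((lam2:ℚ) ^ (-(n:ℤ)) - (lam1:ℚ) ^ (-(n:ℤ))) / v * c with hs'def
    have hs' : s' ∈ Zinv lam1 :=
      hsub1 (zinv_offdiag lam1 lam2 u v hl1 hl2 hv hdvd (-(n:ℤ)) c)
    obtain ⟨a, m, ha⟩ := zinv_sub hl1 (hsub1 hs) hs'
    refine ⟨(A ^ n) *ᵥ ![a, 0] + (A ^ m) *ᵥ ![0, c], -((m:ℤ) + (n:ℤ)), ?_⟩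
    have cast_add : (fun i => ((((A ^ n) *ᵥ ![a, 0] + (A ^ m) *ᵥ ![0, c]) i : ℤ) : ℚ)) =
        (fun i => ((((A ^ n) *ᵥ ![a, 0]) i : ℤ) : ℚ)) +
        (fun i => ((((A ^ m) *ᵥ ![0, c]) i : ℤ) : ℚ)) := by
      funext i; push_cast; simp
    rw [hpow, cast_add, Matrix.mulVec_add]
    rw [← Qmat_mulVec_cast, ← Qmat_mulVec_cast, Qmat_pow, Qmat_pow, hQ]
    rw [← zpow_natCast (Fm (lam1:ℚ) (lam2:ℚ) (u:ℚ) (v:ℚ) 1) n,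
      ← zpow_natCast (Fm (lam1:ℚ) (lam2:ℚ) (u:ℚ) (v:ℚ) 1) m,
      Fm_pow _ _ _ _ h1Q h2Q, Fm_pow _ _ _ _ h1Q h2Q,
      Matrix.mulVec_mulVec, Matrix.mulVec_mulVec,
      Fm_mul _ _ _ _ h1Q h2Q, Fm_mul _ _ _ _ h1Q h2Q]
    have e1 : -((m:ℤ) + (n:ℤ)) + (n:ℤ) = -(m:ℤ) := by ring
    have e2 : -((m:ℤ) + (n:ℤ)) + (m:ℤ) = -(n:ℤ) := by ring
    rw [e1, e2, Fm_mulVec, Fm_mulVec]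
    have hcast : ∀ (q r : ℚ), (fun i => (![q, r] i : ℚ)) = ![q, r] := fun _ _ => rfl
    funext i
    fin_cases i <;>
      simp only [Pi.add_apply, Matrix.cons_val_zero, Matrix.cons_val_one, Matrix.head_cons]
    · show w 0 = ((lam1:ℚ) ^ (-(m:ℤ)) * (a:ℚ) +
        (u:ℚ) * ((lam2:ℚ) ^ (-(m:ℤ)) - (lam1:ℚ) ^ (-(m:ℤ))) / v * (0:ℚ)) +
        ((lam1:ℚ) ^ (-(n:ℤ)) * (0:ℚ) +
        (u:ℚ) * ((lam2:ℚ) ^ (-(n:ℤ)) - (lam1:ℚ) ^ (-(n:ℤ))) / v * (c:ℚ))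
      have ham : (lam1:ℚ) ^ (-(m:ℤ)) * (a:ℚ) = w 0 - s' := by
        rw [_root_.zpow_neg, zpow_natCast, ha]
        rw [inv_mul_eq_div]
      rw [ham, hs'def]
      ring
    · show w 1 = (lam2:ℚ) ^ (-(m:ℤ)) * (0:ℚ) + (lam2:ℚ) ^ (-(n:ℤ)) * (c:ℚ)
      rw [hc, _root_.zpow_neg, zpow_natCast]
      field_simp
      rw [_root_.zpow_neg, zpow_natCast]
      field_simp
      ring
end


section
variable {lam1 lam2 : ℤ}

lemma prime_dvd_of_rad (hl1 : lam1 ≠ 0) (hl2 : lam2 ≠ 0)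
    (hrad : (rad lam2 : ℤ) ∣ (rad lam1 : ℤ)) {p : ℕ} (pp : p.Prime)
    (hp : (p:ℤ) ∣ lam2) : (p:ℤ) ∣ lam1 := by
  have h1 : p ∣ lam2.natAbs := Int.natCast_dvd.mp hp
  have h2 : p ∣ rad lam2 :=
    Finset.dvd_prod_of_mem _ (Nat.mem_primeFactors.mpr ⟨pp, h1, Int.natAbs_ne_zero.mpr hl2⟩)
  have h3 : rad lam2 ∣ rad lam1 := Int.natCast_dvd_natCast.mp hrad
  have h4 : rad lam1 ∣ lam1.natAbs := Nat.prod_primeFactors_dvd _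
  exact Int.natCast_dvd.mpr ((h2.trans h3).trans h4)

lemma lam2_dvd_pow (hl1 : lam1 ≠ 0) (hl2 : lam2 ≠ 0)
    (hrad : (rad lam2 : ℤ) ∣ (rad lam1 : ℤ)) :
    lam2 ∣ lam1 ^ lam2.natAbs := by
  have hn : lam2.natAbs ≠ 0 := Int.natAbs_ne_zero.mpr hl2
  have key : lam2.natAbs ∣ lam1.natAbs ^ lam2.natAbs := by
    refine nat_dvd_pow_of_primes _ hn ?_
    intro p pp hpd
    have : (p:ℤ) ∣ lam2 := Int.natCast_dvd.mpr hpd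
    exact Int.natCast_dvd.mp (prime_dvd_of_rad hl1 hl2 hrad pp this)
  have key2 : lam2.natAbs ∣ (lam1 ^ lam2.natAbs).natAbs := by
    rw [Int.natAbs_pow]; exact key
  exact Int.natAbs_dvd_natAbs.mp key2

lemma no_div {p : ℕ} (pp : p.Prime) (hl2 : lam2 ≠ 0) (h2 : ¬ (p:ℤ) ∣ lam2) {q : ℚ}
    (hq : q ≠ 0) (h : ∀ m : ℕ, q / (p:ℚ) ^ m ∈ Zinv lam2) : False := by
  set m := q.num.natAbs with hm
  obtain ⟨a, j, hj⟩ := h m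
  have hl2Q : (lam2:ℚ) ≠ 0 := Int.cast_ne_zero.mpr hl2
  have hpQ : (p:ℚ) ≠ 0 := Nat.cast_ne_zero.mpr pp.ne_zero
  have hdenQ : ((q.den : ℤ) : ℚ) ≠ 0 := by
    simp [q.den_nz]
  have heq : q.num * lam2 ^ j = a * ((q.den : ℤ) * (p:ℤ) ^ m) := by
    have hq' : (q.num : ℚ) / (q.den : ℚ) = q := q.num_div_den
    have hthis : ((q.num : ℚ) / (q.den : ℚ)) / (p:ℚ) ^ m = (a:ℚ) / (lam2:ℚ) ^ j := by
      rw [hq']; exact hj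
    field_simp at hthis
    rw [mul_comm a]
    exact_mod_cast hthis
  have hdvd : ((p:ℤ)) ^ m ∣ q.num * lam2 ^ j := ⟨a * q.den, by rw [heq]; ring⟩
  have hprime : Prime ((p:ℤ)) := Nat.prime_iff_prime_int.mp pp
  have hnd : ¬ (p:ℤ) ∣ lam2 ^ j := fun hc => h2 (hprime.dvd_of_dvd_pow hc)
  have hnum : ((p:ℤ)) ^ m ∣ q.num := hprime.pow_dvd_of_dvd_mul_right m hnd hdvd
  have hnum' : p ^ m ∣ q.num.natAbs := by
    have := Int.natAbs_dvd_natAbs.mpr hnum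
    simpa [Int.natAbs_pow] using this
  have hpos : 0 < q.num.natAbs := Int.natAbs_pos.mpr (Rat.num_ne_zero.mpr hq)
  have hle : p ^ m ≤ q.num.natAbs := Nat.le_of_dvd hpos hnum'
  have hlt : m < 2 ^ m := Nat.lt_two_pow_self
  have h2p : 2 ^ m ≤ p ^ m := Nat.pow_le_pow_left pp.two_le m
  omega
end


theorem stmt9 (lam1 lam2 u v : ℤ) (hl1 : lam1 ≠ 0) (hl2 : lam2 ≠ 0) (hv : v ≠ 0)
    (huv : Int.gcd u v = 1) (hdvd : v ∣ lam1 - lam2)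
    (A : Matrix (Fin 2) (Fin 2) ℤ)
    (hA : Qmat A =
      !![(1 : ℚ), (u : ℚ); 0, (v : ℚ)] * !![(lam1 : ℚ), 0; 0, (lam2 : ℚ)] *
        (!![(1 : ℚ), (u : ℚ); 0, (v : ℚ)])⁻¹)
    (hrad : (rad lam2 : ℤ) ∣ (rad lam1 : ℤ))
    (hP' : ∃ p : ℕ, p.Prime ∧ (p : ℤ) ∣ A.det ∧
      A.charpoly.map (Int.castRingHom (ZMod p)) ≠ X ^ 2)
    (T : Matrix (Fin 2) (Fin 2) ℚ) :
    ((∀ w ∈ GA A, T *ᵥ w ∈ GA A) ↔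
      ∃ x y z : ℚ, x ∈ Zinv (lam1 * lam2) ∧ y ∈ Zinv (lam1 * lam2) ∧ z ∈ Zinv lam2 ∧
        T = !![x, y; 0, z]) ∧
    ((IsUnit T ∧ (fun w => T *ᵥ w) '' GA A = GA A) ↔
      ∃ x y z : ℚ, ZinvUnit (lam1 * lam2) x ∧ y ∈ Zinv (lam1 * lam2) ∧ ZinvUnit lam2 z ∧
        T = !![x, y; 0, z]) := by
  classical
  have h1Q : (lam1:ℚ) ≠ 0 := Int.cast_ne_zero.mpr hl1
  have h2Q : (lam2:ℚ) ≠ 0 := Int.cast_ne_zero.mpr hl2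
  have hvQ : (v:ℚ) ≠ 0 := Int.cast_ne_zero.mpr hv
  have h12 : lam1 * lam2 ≠ 0 := mul_ne_zero hl1 hl2
  have hQ : Qmat A = Fm (lam1:ℚ) (lam2:ℚ) (u:ℚ) (v:ℚ) 1 := QmatA_eq lam1 lam2 u v hv A hA
  -- subset lemmas
  have hdvdpow : lam1 * lam2 ∣ lam1 ^ (lam2.natAbs + 1) := by
    rw [pow_succ, mul_comm (lam1 ^ lam2.natAbs) lam1]
    exact mul_dvd_mul_left lam1 (lam2_dvd_pow hl1 hl2 hrad)
  have hsub1 : Zinv (lam1 * lam2) ⊆ Zinv lam1 := zinv_subset hl1 hdvdpow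
  have hsub3 : Zinv lam2 ⊆ Zinv (lam1 * lam2) :=
    zinv_subset h12 (e := 1) (by rw [pow_one]; exact ⟨lam1, mul_comm lam1 lam2⟩)
  have hGA : GA A = {w | w 0 ∈ Zinv (lam1 * lam2) ∧ w 1 ∈ Zinv lam2} :=
    GA_eq lam1 lam2 u v hl1 hl2 hv hdvd A hQ hsub1
  -- entries of A
  have e00 : A 0 0 = lam1 := by
    have h := congrFun (congrFun hQ 0) 0
    simp [Qmat, Fm, Matrix.map_apply] at h
    exact_mod_cast h
  have e10 : A 1 0 = 0 := by
    have h := congrFun (congrFun hQ 1) 0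
    simp [Qmat, Fm, Matrix.map_apply] at h
    exact_mod_cast h
  have e11 : A 1 1 = lam2 := by
    have h := congrFun (congrFun hQ 1) 1
    simp [Qmat, Fm, Matrix.map_apply] at h
    exact_mod_cast h
  have hdetA : A.det = lam1 * lam2 := by
    rw [Matrix.det_fin_two, e00, e10, e11, mul_zero, sub_zero]
  -- the prime
  obtain ⟨p, pp, pdet, pchar⟩ := hP'
  have hpchar : ¬ ((p:ℤ) ∣ lam1 ∧ (p:ℤ) ∣ lam2) := by
    rintro ⟨hp1, hp2⟩
    apply pchar
    have hcp : A.charpoly = (X - C lam1) * (X - C lam2) := by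
      show (Matrix.charmatrix A).det = _
      rw [Matrix.det_fin_two, Matrix.charmatrix_apply_eq, Matrix.charmatrix_apply_eq,
        Matrix.charmatrix_apply_ne _ _ _ (by decide), Matrix.charmatrix_apply_ne _ _ _ (by decide),
        e00, e10, e11]
      simp
    rw [hcp, Polynomial.map_mul, Polynomial.map_sub, Polynomial.map_sub, map_X, map_C, map_C]
    have z1 : (Int.castRingHom (ZMod p)) lam1 = 0 := by
      simpa [Int.castRingHom] using (ZMod.intCast_zmod_eq_zero_iff_dvd lam1 p).mpr hp1
    have z2 : (Int.castRingHom (ZMod p)) lam2 = 0 := by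
      simpa [Int.castRingHom] using (ZMod.intCast_zmod_eq_zero_iff_dvd lam2 p).mpr hp2
    rw [z1, z2, map_zero, sub_zero, sq]
  have hprimeZ : Prime ((p:ℤ)) := Nat.prime_iff_prime_int.mp pp
  have hpl : (p:ℤ) ∣ lam1 ∧ ¬ (p:ℤ) ∣ lam2 := by
    rw [hdetA] at pdet
    rcases hprimeZ.dvd_mul.mp pdet with h1 | h2
    · exact ⟨h1, fun hc => hpchar ⟨h1, hc⟩⟩
    · exact absurd ⟨prime_dvd_of_rad hl1 hl2 hrad pp h2, h2⟩ hpchar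
  obtain ⟨hpl1, hpl2⟩ := hpl
  have hpR : ∀ m : ℕ, (1 : ℚ) / (p:ℚ) ^ m ∈ Zinv (lam1 * lam2) := by
    intro m
    have : Zinv (p:ℤ) ⊆ Zinv (lam1 * lam2) :=
      zinv_subset h12 (e := 1) (by rw [pow_one]; exact hpl1.mul_right lam2)
    exact this ⟨1, m, by push_cast; ring⟩
  -- the key characterization, part (i), for an arbitrary matrix
  have key : ∀ S : Matrix (Fin 2) (Fin 2) ℚ, (∀ w ∈ GA A, S *ᵥ w ∈ GA A) ↔
      ∃ x y z : ℚ, x ∈ Zinv (lam1 * lam2) ∧ y ∈ Zinv (lam1 * lam2) ∧ z ∈ Zinv lam2 ∧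
        S = !![x, y; 0, z] := by
    intro S
    constructor
    · intro h
      have happ : ∀ (q r : ℚ), q ∈ Zinv (lam1 * lam2) → r ∈ Zinv lam2 →
          (S 0 0 * q + S 0 1 * r ∈ Zinv (lam1 * lam2) ∧
            S 1 0 * q + S 1 1 * r ∈ Zinv lam2) := by
        intro q r hq hr
        have hmem : ![q, r] ∈ GA A := by
          rw [hGA]; exact ⟨by simpa using hq, by simpa using hr⟩
        have := h ![q, r] hmem
        rw [hGA] at this
        obtain ⟨c0, c1⟩ := this
        constructor
        · simpa [Matrix.mulVec, dotProduct, Fin.sum_univ_two, Matrix.vecHead, Matrix.vecTail] using c0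
        · simpa [Matrix.mulVec, dotProduct, Fin.sum_univ_two, Matrix.vecHead, Matrix.vecTail] using c1
      have h1 := happ 1 0 (zinv_one _) (zinv_zero _)
      have h2 := happ 0 1 (zinv_zero _) (zinv_one _)
      have hS00 : S 0 0 ∈ Zinv (lam1 * lam2) := by simpa using h1.1
      have hS01 : S 0 1 ∈ Zinv (lam1 * lam2) := by simpa using h2.1
      have hS11 : S 1 1 ∈ Zinv lam2 := by simpa using h2.2
      have hS10 : S 1 0 = 0 := by
        by_contra hne
        refine no_div pp hl2 hpl2 hne fun m => ?_
        have := (happ ((1:ℚ) / (p:ℚ) ^ m) 0 (hpR m) (zinv_zero _)).2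
        simpa [div_eq_mul_inv, mul_comm] using this
      refine ⟨S 0 0, S 0 1, S 1 1, hS00, hS01, hS11, ?_⟩
      conv_lhs => rw [Matrix.eta_fin_two S]
      rw [hS10]
    · rintro ⟨x, y, z, hx, hy, hz, rfl⟩ w hw
      rw [hGA] at hw ⊢
      obtain ⟨hw0, hw1⟩ := hw
      constructor
      · have : (!![x, y; 0, z] *ᵥ w) 0 = x * w 0 + y * w 1 := by
          simp [Matrix.mulVec, dotProduct, Fin.sum_univ_two, Matrix.vecHead, Matrix.vecTail]
        rw [this]
        exact zinv_add h12 (zinv_mul hx hw0) (zinv_mul hy (hsub3 hw1))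
      · have : (!![x, y; 0, z] *ᵥ w) 1 = z * w 1 := by
          simp [Matrix.mulVec, dotProduct, Fin.sum_univ_two, Matrix.vecHead, Matrix.vecTail]
        rw [this]
        exact zinv_mul hz hw1
  refine ⟨key T, ?_⟩
  constructor
  · rintro ⟨hU, him⟩
    have hsubT : ∀ w ∈ GA A, T *ᵥ w ∈ GA A := by
      intro w hw
      rw [← him]
      exact Set.mem_image_of_mem _ hw
    obtain ⟨x, y, z, hx, hy, hz, hT⟩ := (key T).mp hsubT
    have hdetU : IsUnit T.det := (Matrix.isUnit_iff_isUnit_det T).mp hU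
    have hdetval : T.det = x * z := by rw [hT, Matrix.det_fin_two_of]; ring
    have hxz : x * z ≠ 0 := by
      rw [hdetval] at hdetU
      exact hdetU.ne_zero
    have hx0 : x ≠ 0 := fun hc => hxz (by rw [hc, zero_mul])
    have hz0 : z ≠ 0 := fun hc => hxz (by rw [hc, mul_zero])
    have hinvsub : ∀ w ∈ GA A, T⁻¹ *ᵥ w ∈ GA A := by
      intro w hw
      rw [← him] at hw
      obtain ⟨w', hw', rfl⟩ := hw
      rw [Matrix.mulVec_mulVec, Matrix.nonsing_inv_mul _ hdetU, Matrix.one_mulVec]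
      exact hw'
    obtain ⟨x', y', z', hx', hy', hz', hT'⟩ := (key T⁻¹).mp hinvsub
    have hmul : T * T⁻¹ = 1 := Matrix.mul_nonsing_inv _ hdetU
    rw [hT', hT, Matrix.mul_fin_two] at hmul
    have h00 : x * x' = 1 := by
      have := congrFun (congrFun hmul 0) 0
      simpa using this
    have h11 : z * z' = 1 := by
      have := congrFun (congrFun hmul 1) 1
      simpa using this
    have hxinv : x⁻¹ = x' := (eq_inv_of_mul_eq_one_right h00).symm
    have hzinv : z⁻¹ = z' := (eq_inv_of_mul_eq_one_right h11).symm
    exact ⟨x, y, z, ⟨hx0, hx, by rw [hxinv]; exact hx'⟩, hy,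
      ⟨hz0, hz, by rw [hzinv]; exact hz'⟩, hT⟩
  · rintro ⟨x, y, z, ⟨hx0, hx, hxi⟩, hy, ⟨hz0, hz, hzi⟩, rfl⟩
    have hdetval : (!![x, y; 0, z]).det = x * z := by rw [Matrix.det_fin_two_of]; ring
    have hU : IsUnit (!![x, y; 0, z]) := by
      rw [Matrix.isUnit_iff_isUnit_det, hdetval]
      exact isUnit_iff_ne_zero.mpr (mul_ne_zero hx0 hz0)
    refine ⟨hU, ?_⟩
    apply Set.Subset.antisymm
    · rintro _ ⟨w, hw, rfl⟩
      exact (key _).mpr ⟨x, y, z, hx, hy, hz, rfl⟩ w hw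
    · intro w hw
      set Bm : Matrix (Fin 2) (Fin 2) ℚ := !![x⁻¹, -(x⁻¹ * y * z⁻¹); 0, z⁻¹] with hBm
      have hBmem : ∀ w' ∈ GA A, Bm *ᵥ w' ∈ GA A := by
        refine (key Bm).mpr ⟨x⁻¹, -(x⁻¹ * y * z⁻¹), z⁻¹, hxi,
          zinv_neg (zinv_mul (zinv_mul hxi hy) (hsub3 hzi)), hzi, rfl⟩
      refine ⟨Bm *ᵥ w, hBmem w hw, ?_⟩
      show !![x, y; 0, z] *ᵥ (Bm *ᵥ w) = w
      rw [Matrix.mulVec_mulVec]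
      have hone : !![x, y; 0, z] * Bm = 1 := by
        ext i j
        fin_cases i <;> fin_cases j <;>
            simp [hBm, Matrix.mul_apply, Fin.sum_univ_two, Matrix.one_apply] <;>
          (field_simp; try ring)
      rw [hone, Matrix.one_mulVec]
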